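/- arXiv:1502.02192 — 9 statements merged into one kernel-verified Lean document; each statement's English description precedes it below -/
import Mathlib

section
/- Let B be a finite group. Then the commutator identity ⁅X ⊓ Y, Y⁆ = X ⊓ ⁅Y, Y⁆ holds for all normal subgroups X, Y of B if and only if ⁅N, N⁆ ≤ D holds for every relevant triple (D, T, N) of B. -/
/-- In the lattice of normal subgroups of a group `G`, `(D, T, N)` is a *relevant triple* if:
`D` is completely meet-irreducible with unique upper cover `T`, the prime quotient `T/D`
is abelian (`⁅T, T⁆ ≤ D`), and `N` is the largest normal subgroup with `⁅T, N⁆ ≤ D`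
(the centralizer `(D : T)`). -/
def RelevantTriple {G : Type*} [Group G] (D T N : Subgroup G) : Prop :=
  D.Normal ∧ T.Normal ∧ N.Normal ∧
  D < T ∧ (∀ X : Subgroup G, X.Normal → D < X → T ≤ X) ∧
  ⁅T, T⁆ ≤ D ∧
  ⁅T, N⁆ ≤ D ∧ (∀ N' : Subgroup G, N'.Normal → ⁅T, N'⁆ ≤ D → N' ≤ N)

/-!
Both directions rest on the fact that a completely meet-irreducible normal subgroup `D` with
upper cover `T` is "prime" for the normal subgroups meeting `T` inside `D`: if `T ⊓ M ≤ D` then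
`M ≤ D`, because otherwise `T ≤ D ⊔ M` and Dedekind's law gives `T = D ⊔ (T ⊓ M) ≤ D`.

(C1) ⇒ abelian centralizers: `T ≤ N`, so (C1) gives `T ⊓ ⁅N, N⁆ = ⁅T, N⁆ ≤ D`, hence `⁅N, N⁆ ≤ D`.

Abelian centralizers ⇒ (C1): if `b ∈ X ⊓ ⁅Y, Y⁆` lies outside `⁅X ⊓ Y, Y⁆`, take `D` maximal
among normal subgroups containing `⁅X ⊓ Y, Y⁆` and avoiding `b`; it has an upper cover
`T ≤ D ⊔ (X ⊓ ⁅Y, Y⁆)`, so `Y` centralizes `T/D`. Then `T/D` is abelian, `(D, T, N)` is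
relevant for the centralizer `N ≥ Y`, and `b ∈ ⁅Y, Y⁆ ≤ ⁅N, N⁆ ≤ D`.
-/

open Subgroup

section

variable {G : Type*} [Group G]

theorem Subgroup.sup_inf_assoc_of_le_of_normal {D T : Subgroup G} [D.Normal] (M : Subgroup G)
    (hDT : D ≤ T) : (D ⊔ M) ⊓ T = D ⊔ M ⊓ T := by
  apply SetLike.coe_injective
  rw [coe_inf, normal_mul, normal_mul, ← mul_inf_assoc _ _ _ hDT]

theorem le_of_inf_le_of_isUpperCover {D T M : Subgroup G} [D.Normal] [M.Normal] (hDT : D < T)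
    (hcov : ∀ X : Subgroup G, X.Normal → D < X → T ≤ X) (hTM : T ⊓ M ≤ D) : M ≤ D := by
  by_contra hMD
  have hT : T ≤ D ⊔ M := hcov _ (sup_normal D M) (left_lt_sup.2 hMD)
  have hTD : T ≤ D := calc
    T = (D ⊔ M) ⊓ T := (inf_eq_right.2 hT).symm
    _ = D ⊔ M ⊓ T := sup_inf_assoc_of_le_of_normal M hDT.le
    _ ≤ D := sup_le le_rfl (inf_comm M T ▸ hTM)
  exact hDT.not_ge hTD

/-- The paper's `(D : T)`. -/
def centralizerMod (D T : Subgroup G) [D.Normal] : Subgroup G :=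
  (centralizer (T.map (QuotientGroup.mk' D) : Set (G ⧸ D))).comap (QuotientGroup.mk' D)

theorem commutator_le_iff_le_centralizerMod {D : Subgroup G} [D.Normal] {T K : Subgroup G} :
    ⁅T, K⁆ ≤ D ↔ K ≤ centralizerMod D T := by
  rw [centralizerMod, ← map_le_iff_le_comap, ← commutator_eq_bot_iff_le_centralizer,
    ← map_commutator, Subgroup.map_eq_bot_iff, QuotientGroup.ker_mk', commutator_comm]

instance centralizerMod_normal (D T : Subgroup G) [D.Normal] [hT : T.Normal] :
    (centralizerMod D T).Normal :=
  have := hT.map _ (QuotientGroup.mk'_surjective D)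
  Normal.comap inferInstance _

theorem relevantTriple_centralizerMod {D T : Subgroup G} [hD : D.Normal] [hT : T.Normal]
    (hDT : D < T) (hcov : ∀ X : Subgroup G, X.Normal → D < X → T ≤ X) (hTT : ⁅T, T⁆ ≤ D) :
    RelevantTriple D T (centralizerMod D T) :=
  ⟨hD, hT, inferInstance, hDT, hcov, hTT, commutator_le_iff_le_centralizerMod.2 le_rfl,
    fun _ _ => commutator_le_iff_le_centralizerMod.1⟩

theorem RelevantTriple.commutator_le_of_C1
    (hC1 : ∀ X Y : Subgroup G, X.Normal → Y.Normal → ⁅X ⊓ Y, Y⁆ = X ⊓ ⁅Y, Y⁆)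
    {D T N : Subgroup G} (h : RelevantTriple D T N) : ⁅N, N⁆ ≤ D := by
  obtain ⟨hD, hT, hN, hDT, hcov, hTT, hTN, hmax⟩ := h
  have hTleN : T ≤ N := hmax T hT hTT
  refine le_of_inf_le_of_isUpperCover hDT hcov ?_
  rwa [← hC1 T N hT hN, inf_eq_left.2 hTleN]

theorem commutator_inf_le_inf_commutator (X Y : Subgroup G) [X.Normal] :
    ⁅X ⊓ Y, Y⁆ ≤ X ⊓ ⁅Y, Y⁆ :=
  le_inf ((commutator_mono inf_le_left le_rfl).trans (commutator_le_left X Y))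
    (commutator_mono inf_le_right le_rfl)

theorem exists_normal_maximal_notMem [Finite G] {A : Subgroup G} [A.Normal] {b : G}
    (hbA : b ∉ A) :
    ∃ D : Subgroup G, D.Normal ∧ A ≤ D ∧ b ∉ D ∧ ∀ Z : Subgroup G, Z.Normal → D < Z → b ∈ Z := by
  obtain ⟨D, ⟨hD, hAD, hbD⟩, hDmax⟩ :=
    Set.Finite.exists_maximalFor id {Z : Subgroup G | Z.Normal ∧ A ≤ Z ∧ b ∉ Z}
      (Set.toFinite _) ⟨A, inferInstance, le_rfl, hbA⟩
  refine ⟨D, hD, hAD, hbD, fun Z hZ hDZ => ?_⟩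
  by_contra hbZ
  exact hDZ.not_ge (hDmax ⟨hZ, hAD.trans hDZ.le, hbZ⟩ hDZ.le)

theorem exists_isUpperCover_of_forall_lt_mem {D : Subgroup G} [D.Normal] {b : G} (hbD : b ∉ D)
    (hmax : ∀ Z : Subgroup G, Z.Normal → D < Z → b ∈ Z) :
    ∃ T : Subgroup G, T.Normal ∧ D < T ∧ ∀ Z : Subgroup G, Z.Normal → D < Z → T ≤ Z :=
  ⟨D ⊔ normalClosure {b}, sup_normal _ _,
    left_lt_sup.2 fun h => hbD (h (subset_normalClosure rfl)),
    fun Z hZ hDZ => sup_le hDZ.le <|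
      normalClosure_le_normal (Set.singleton_subset_iff.2 (hmax Z hZ hDZ))⟩

theorem commutator_inf_eq_of_relevantTriples [Finite G]
    (hRT : ∀ D T N : Subgroup G, RelevantTriple D T N → ⁅N, N⁆ ≤ D)
    (X Y : Subgroup G) [X.Normal] [Y.Normal] : ⁅X ⊓ Y, Y⁆ = X ⊓ ⁅Y, Y⁆ := by
  refine le_antisymm (commutator_inf_le_inf_commutator X Y) fun b hb => ?_
  by_contra hbA
  obtain ⟨D, hD, hAD, hbD, hmax⟩ := exists_normal_maximal_notMem hbA
  obtain ⟨T, hT, hDT, hcov⟩ := exists_isUpperCover_of_forall_lt_mem hbD hmax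
  set K := X ⊓ ⁅Y, Y⁆
  have hKY : K ≤ Y := inf_le_right.trans (commutator_le_right Y Y)
  have hTK : T ≤ D ⊔ K := hcov _ (sup_normal D K) (left_lt_sup.2 fun h => hbD (h hb))
  have hKYD : ⁅K, Y⁆ ≤ D := (commutator_mono (le_inf inf_le_left hKY) le_rfl).trans hAD
  have hTY : T ≤ centralizerMod D Y := hTK.trans <| sup_le
    (commutator_le_iff_le_centralizerMod.1 (commutator_le_right Y D))
    (commutator_le_iff_le_centralizerMod.1 (commutator_comm K Y ▸ hKYD))
  have hYN : Y ≤ centralizerMod D T := commutator_le_iff_le_centralizerMod.1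
    (commutator_comm Y T ▸ commutator_le_iff_le_centralizerMod.2 hTY)
  have hTN : T ≤ centralizerMod D T := hTK.trans <| sup_le
    (commutator_le_iff_le_centralizerMod.1 (commutator_le_right T D)) (hKY.trans hYN)
  have hrel := relevantTriple_centralizerMod hDT hcov (commutator_le_iff_le_centralizerMod.2 hTN)
  exact hbD (hRT _ _ _ hrel (commutator_mono hYN hYN hb.2))

end

/-- For a finite group `B`, the commutator identity (C1),
`⁅X ⊓ Y, Y⁆ = X ⊓ ⁅Y, Y⁆` for all normal subgroups `X, Y`, holds if and only if
`⁅N, N⁆ ≤ D` for every relevant triple `(D, T, N)` of `B`. -/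
theorem C1_iff_relevant_triples_abelian
    {B : Type*} [Group B] [Finite B] :
    (∀ X Y : Subgroup B, X.Normal → Y.Normal → ⁅X ⊓ Y, Y⁆ = X ⊓ ⁅Y, Y⁆) ↔
    (∀ D T N : Subgroup B, RelevantTriple D T N → ⁅N, N⁆ ≤ D) :=
  ⟨fun hC1 _ _ _ h => h.commutator_le_of_C1 hC1,
    fun hRT X Y _ _ => commutator_inf_eq_of_relevantTriples hRT X Y⟩
end

section
/- Let G be a finite group such that for every normal subgroup M of G for which the quotient G/M is subdirectly irreducible, G/M is solvable or G/M satisfies (C8). Then there exists exactly one pair (S, R) of normal subgroups of G such that S ⊓ R = ⊥, S ⊔ R = ⊤, G/S is solvable, and G/R satisfies (C8). Moreover, every normal subgroup X of G satisfies X = (X ⊔ S) ⊓ (X ⊔ R). -/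
/-- The quotient `G/M` is subdirectly irreducible: the intersection of all normal subgroups
of `G` strictly containing `M` strictly contains `M`. -/
def QuotSubdirectlyIrreducible {G : Type*} [Group G] (M : Subgroup G) : Prop :=
  M < sInf {X : Subgroup G | X.Normal ∧ M < X}

/-- A group `Q` satisfies (C8) if `⁅Q, X⁆ = X` for every normal subgroup `X` of `Q`. -/
def IsC8 (Q : Type*) [Group Q] : Prop :=
  ∀ X : Subgroup Q, X.Normal → ⁅(⊤ : Subgroup Q), X⁆ = X

/-- The quotient `G/M` is solvable. -/
def QuotSolvable {G : Type*} [Group G] (M : Subgroup G) (hM : M.Normal) : Prop :=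
  haveI := hM
  IsSolvable (G ⧸ M)

/-- The quotient `G/M` satisfies (C8). -/
def QuotC8 {G : Type*} [Group G] (M : Subgroup G) (hM : M.Normal) : Prop :=
  haveI := hM
  IsC8 (G ⧸ M)

/-!
Let `S₀` be the least normal subgroup with solvable quotient and `R₀` the least one with (C8)
quotient; the latter exists because (C8) quotients are closed under finite intersections, by
the modular law for normal subgroups. A subdirectly irreducible quotient `G/M` is solvable or
(C8), so `M` contains `S₀` or `R₀`. Every normal subgroup `X` is the intersection of the normal
subgroups `M ≥ X` with `G/M` subdirectly irreducible, hence `X = (X ⊔ S₀) ⊓ (X ⊔ R₀)`; for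
`X = ⊥` this is `S₀ ⊓ R₀ = ⊥`. The quotient `G/(S₀ ⊔ R₀)` is solvable and perfect, so
`S₀ ⊔ R₀ = ⊤`. Any other pair `(S, R)` has `S₀ ≤ S` and `R₀ ≤ R`, and the modular law forces
equality.
-/

theorem InfClosed.exists_isLeast {α : Type*} [SemilatticeInf α] {s : Set α} (hs : InfClosed s)
    (hfin : s.Finite) (hne : s.Nonempty) : ∃ a, IsLeast s a := by
  obtain ⟨a, ha⟩ := hfin.exists_minimal hne
  exact ⟨a, ha.prop, fun b hb => inf_eq_left.mp (ha.eq_of_le (hs ha.prop hb) inf_le_left)⟩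

namespace Subgroup

variable {G : Type*} [Group G]

theorem sup_inf_assoc_of_le_of_normal_s5 {H K : Subgroup G} (N : Subgroup G) [N.Normal]
    (h : H ≤ K) : (H ⊔ N) ⊓ K = H ⊔ N ⊓ K := by
  refine le_antisymm ?_ (sup_le (le_inf le_sup_left h) (inf_le_inf_right K le_sup_right))
  intro x hx
  obtain ⟨hxHN, hxK⟩ := mem_inf.mp hx
  obtain ⟨y, hy, n, hn, rfl⟩ := mem_sup_of_normal_right.mp hxHN
  exact mul_mem_sup hy (mem_inf.mpr ⟨hn, (mul_mem_cancel_left (h hy)).mp hxK⟩)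

theorem eq_of_le_of_inf_eq_bot_of_sup_eq_top {S₀ S R₀ R : Subgroup G} [R₀.Normal]
    (hS : S₀ ≤ S) (hR : R₀ ≤ R) (hSR : S ⊓ R = ⊥) (hSR₀ : S₀ ⊔ R₀ = ⊤) : S = S₀ := by
  refine le_antisymm ?_ hS
  calc S = (S₀ ⊔ R₀) ⊓ S := by rw [hSR₀, top_inf_eq]
    _ = S₀ ⊔ R₀ ⊓ S := sup_inf_assoc_of_le_of_normal_s5 R₀ hS
    _ ≤ S₀ ⊔ R ⊓ S := sup_le_sup_left (inf_le_inf_right S hR) S₀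
    _ = S₀ := by rw [inf_comm, hSR, sup_bot_eq]

end Subgroup

open Subgroup

section

variable {G : Type*} [Group G]

theorem quotSolvable_iff {M : Subgroup G} (hM : M.Normal) :
    QuotSolvable M hM ↔ ∃ n, derivedSeries G n ≤ M := by
  have := hM
  show Group.IsSolvable (G ⧸ M) ↔ _
  simp only [Group.isSolvable_def, ← map_derivedSeries_eq (QuotientGroup.mk'_surjective M),
    Subgroup.map_eq_bot_iff, QuotientGroup.ker_mk']

theorem quotSolvable_inf {M N : Subgroup G} {hM : M.Normal} {hN : N.Normal}
    (hMs : QuotSolvable M hM) (hNs : QuotSolvable N hN) :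
    QuotSolvable (M ⊓ N) (normal_inf_normal M N) := by
  obtain ⟨m, hm⟩ := (quotSolvable_iff hM).mp hMs
  obtain ⟨n, hn⟩ := (quotSolvable_iff hN).mp hNs
  exact (quotSolvable_iff _).mpr ⟨max m n, le_inf
    ((derivedSeries_antitone G (le_max_left m n)).trans hm)
    ((derivedSeries_antitone G (le_max_right m n)).trans hn)⟩

theorem quotC8_iff {R : Subgroup G} (hR : R.Normal) :
    QuotC8 R hR ↔ ∀ X : Subgroup G, X.Normal → X ≤ ⁅(⊤ : Subgroup G), X⁆ ⊔ R := by
  have := hR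
  show IsC8 (G ⧸ R) ↔ _
  set f := QuotientGroup.mk' R
  have hf : Function.Surjective f := QuotientGroup.mk'_surjective R
  have map_commutator_top (X : Subgroup G) :
      ⁅(⊤ : Subgroup G), X⁆.map f = ⁅(⊤ : Subgroup (G ⧸ R)), X.map f⁆ := by
    rw [map_commutator, map_top_of_surjective f hf]
  constructor
  · intro hC8 X hX
    calc X ≤ (X.map f).comap f := le_comap_map f X
      _ = (⁅⊤, X⁆.map f).comap f := by rw [map_commutator_top, hC8 _ (hX.map f hf)]
      _ = ⁅⊤, X⁆ ⊔ R := by rw [comap_map_eq, QuotientGroup.ker_mk']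
  · intro h Y hY
    refine le_antisymm (commutator_le_right _ _) ?_
    calc Y = (Y.comap f).map f := (map_comap_eq_self_of_surjective hf Y).symm
      _ ≤ (⁅⊤, Y.comap f⁆ ⊔ R).map f := map_mono (h _ (hY.comap f))
      _ = ⁅⊤, Y⁆ := by
        rw [Subgroup.map_sup, map_commutator_top, map_comap_eq_self_of_surjective hf,
          QuotientGroup.map_mk'_self, sup_bot_eq]

theorem quotC8_inf {R₁ R₂ : Subgroup G} {h₁ : R₁.Normal} {h₂ : R₂.Normal}
    (hC₁ : QuotC8 R₁ h₁) (hC₂ : QuotC8 R₂ h₂) :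
    QuotC8 (R₁ ⊓ R₂) (normal_inf_normal R₁ R₂) := by
  rw [quotC8_iff] at hC₁ hC₂ ⊢
  intro X hX
  have hXR₁ : R₁ ⊓ X ≤ ⁅⊤, X⁆ ⊔ R₁ ⊓ R₂ :=
    calc R₁ ⊓ X ≤ (⁅⊤, R₁ ⊓ X⁆ ⊔ R₂) ⊓ R₁ := le_inf (hC₂ _ inferInstance) inf_le_left
      _ = ⁅⊤, R₁ ⊓ X⁆ ⊔ R₂ ⊓ R₁ :=
        sup_inf_assoc_of_le_of_normal_s5 R₂ ((commutator_le_right _ _).trans inf_le_left)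
      _ ≤ ⁅⊤, X⁆ ⊔ R₁ ⊓ R₂ :=
        sup_le_sup (commutator_mono le_rfl inf_le_right) (inf_comm R₂ R₁).le
  calc X = (⁅⊤, X⁆ ⊔ R₁) ⊓ X := (inf_eq_right.mpr (hC₁ X hX)).symm
    _ = ⁅⊤, X⁆ ⊔ R₁ ⊓ X := sup_inf_assoc_of_le_of_normal_s5 R₁ (commutator_le_right _ _)
    _ ≤ ⁅⊤, X⁆ ⊔ R₁ ⊓ R₂ := sup_le le_sup_left hXR₁

theorem IsC8.derivedSeries_eq_top {Q : Type*} [Group Q] (h : IsC8 Q) (n : ℕ) :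
    derivedSeries Q n = ⊤ := by
  induction n with
  | zero => rfl
  | succ n ih => rw [derivedSeries_succ, ih, h ⊤ inferInstance]

theorem sup_eq_top_of_quotSolvable_of_quotC8 {S R : Subgroup G} {hS : S.Normal} {hR : R.Normal}
    (hSs : QuotSolvable S hS) (hRc : QuotC8 R hR) : S ⊔ R = ⊤ := by
  have := hR
  obtain ⟨n, hn⟩ := (quotSolvable_iff hS).mp hSs
  have hperfect : derivedSeries (G ⧸ R) n = ⊤ := IsC8.derivedSeries_eq_top hRc n
  rw [eq_top_iff, ← comap_top (QuotientGroup.mk' R), ← hperfect,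
    ← map_derivedSeries_eq (QuotientGroup.mk'_surjective R), comap_map_eq,
    QuotientGroup.ker_mk']
  exact sup_le_sup_right hn R

variable [Finite G]

theorem exists_isLeast_quotSolvable :
    ∃ S, IsLeast {M : Subgroup G | ∃ hM : M.Normal, QuotSolvable M hM} S :=
  InfClosed.exists_isLeast (fun _ ⟨_, hM⟩ _ ⟨_, hN⟩ => ⟨_, quotSolvable_inf hM hN⟩)
    (Set.toFinite _) ⟨⊤, inferInstance, (quotSolvable_iff _).mpr ⟨0, le_top⟩⟩

theorem exists_isLeast_quotC8 :
    ∃ R, IsLeast {M : Subgroup G | ∃ hM : M.Normal, QuotC8 M hM} R :=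
  InfClosed.exists_isLeast (fun _ ⟨_, hM⟩ _ ⟨_, hN⟩ => ⟨_, quotC8_inf hM hN⟩)
    (Set.toFinite _) ⟨⊤, inferInstance, (quotC8_iff _).mpr fun _ _ => le_top.trans le_sup_right⟩

theorem exists_quotSubdirectlyIrreducible {N : Subgroup G} (hN : N.Normal) {a : G} (ha : a ∉ N) :
    ∃ M : Subgroup G, M.Normal ∧ N ≤ M ∧ a ∉ M ∧ QuotSubdirectlyIrreducible M := by
  obtain ⟨M, ⟨hM, hNM, haM⟩, hmax⟩ :=
    (Set.toFinite {M : Subgroup G | M.Normal ∧ N ≤ M ∧ a ∉ M}).exists_maximal ⟨N, hN, le_rfl, ha⟩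
  refine ⟨M, hM, hNM, haM, lt_of_le_of_ne (le_sInf fun X hX => hX.2.le) fun h => haM ?_⟩
  rw [h, mem_sInf]
  rintro X ⟨hX, hMX⟩
  by_contra haX
  exact hMX.not_ge (hmax ⟨hX, hNM.trans hMX.le, haX⟩ hMX.le)

theorem sup_inf_sup_le_of_quotSubdirectlyIrreducible {S R X : Subgroup G} (hX : X.Normal)
    (h : ∀ M : Subgroup G, M.Normal → QuotSubdirectlyIrreducible M → S ≤ M ∨ R ≤ M) :
    (X ⊔ S) ⊓ (X ⊔ R) ≤ X := by
  intro a ha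
  by_contra haX
  obtain ⟨M, hM, hXM, haM, hMsi⟩ := exists_quotSubdirectlyIrreducible hX haX
  rcases h M hM hMsi with hSM | hRM
  · exact haM (sup_le hXM hSM (mem_inf.mp ha).1)
  · exact haM (sup_le hXM hRM (mem_inf.mp ha).2)

end

/-- Let `G` be a finite group in which every subdirectly irreducible quotient is solvable
or satisfies (C8). Then there is exactly one pair `(S, R)` of complementary normal subgroups
with `G/S` solvable and `G/R` a (C8)-group; moreover every normal subgroup `X` is a
product congruence relative to this factorization: `X = (X ⊔ S) ⊓ (X ⊔ R)`. -/
theorem solvable_C8_factorization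
    {G : Type*} [Group G] [Finite G]
    (hSI : ∀ (M : Subgroup G) (hM : M.Normal), QuotSubdirectlyIrreducible M →
      QuotSolvable M hM ∨ QuotC8 M hM) :
    (∃! p : Subgroup G × Subgroup G,
      ∃ (hS : p.1.Normal) (hR : p.2.Normal),
        p.1 ⊓ p.2 = ⊥ ∧ p.1 ⊔ p.2 = ⊤ ∧ QuotSolvable p.1 hS ∧ QuotC8 p.2 hR) ∧
    (∀ (S R : Subgroup G) (hS : S.Normal) (hR : R.Normal),
      S ⊓ R = ⊥ → S ⊔ R = ⊤ → QuotSolvable S hS → QuotC8 R hR →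
      ∀ X : Subgroup G, X.Normal → X = (X ⊔ S) ⊓ (X ⊔ R)) := by
  obtain ⟨S₀, ⟨hS₀, hS₀s⟩, hS₀least⟩ := exists_isLeast_quotSolvable (G := G)
  obtain ⟨R₀, ⟨hR₀, hR₀c⟩, hR₀least⟩ := exists_isLeast_quotC8 (G := G)
  have hsplit (M : Subgroup G) (hM : M.Normal) (hMsi : QuotSubdirectlyIrreducible M) :
      S₀ ≤ M ∨ R₀ ≤ M :=
    (hSI M hM hMsi).imp (fun h => hS₀least ⟨hM, h⟩) (fun h => hR₀least ⟨hM, h⟩)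
  have hsup : S₀ ⊔ R₀ = ⊤ := sup_eq_top_of_quotSolvable_of_quotC8 hS₀s hR₀c
  have hinf : S₀ ⊓ R₀ = ⊥ := by
    simpa using sup_inf_sup_le_of_quotSubdirectlyIrreducible normal_bot hsplit
  have huniq (S R : Subgroup G) (hS : S.Normal) (hR : R.Normal) (hSR : S ⊓ R = ⊥)
      (hSs : QuotSolvable S hS) (hRc : QuotC8 R hR) : S = S₀ ∧ R = R₀ :=
    ⟨eq_of_le_of_inf_eq_bot_of_sup_eq_top (hS₀least ⟨hS, hSs⟩) (hR₀least ⟨hR, hRc⟩) hSR hsup,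
      eq_of_le_of_inf_eq_bot_of_sup_eq_top (hR₀least ⟨hR, hRc⟩) (hS₀least ⟨hS, hSs⟩)
        (by rwa [inf_comm]) (by rwa [sup_comm])⟩
  refine ⟨⟨(S₀, R₀), ⟨hS₀, hR₀, hinf, hsup, hS₀s, hR₀c⟩, ?_⟩, ?_⟩
  · rintro ⟨S, R⟩ ⟨hS, hR, hSR, -, hSs, hRc⟩
    obtain ⟨rfl, rfl⟩ := huniq S R hS hR hSR hSs hRc
    rfl
  · intro S R hS hR hSR _ hSs hRc X hX
    obtain ⟨rfl, rfl⟩ := huniq S R hS hR hSR hSs hRc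
    exact le_antisymm (le_inf le_sup_left le_sup_left)
      (sup_inf_sup_le_of_quotSubdirectlyIrreducible hX hsplit)
end

section
/- Let G be a finite group such that for every normal subgroup M of G for which the quotient G/M is subdirectly irreducible, G/M is nilpotent or G/M satisfies (C8). Then there exist normal subgroups S and R of G with S ⊓ R = ⊥, S ⊔ R = ⊤, G/S nilpotent, and G/R satisfying (C8); moreover there exists n₀ such that for every n ≥ n₀, S equals the n-th term of the lower central series of G and R equals the n-th term of the upper central series of G. -/
/-- The quotient `G/M` is nilpotent. -/
def QuotNilpotent {G : Type*} [Group G] (M : Subgroup G) (hM : M.Normal) : Prop :=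
  haveI := hM
  Group.IsNilpotent (G ⧸ M)

def SIQuotientsNilpotentOrC8 (G : Type*) [Group G] : Prop :=
  ∀ (M : Subgroup G) (hM : M.Normal), QuotSubdirectlyIrreducible M →
    QuotNilpotent M hM ∨ QuotC8 M hM

open QuotientGroup

namespace Subgroup

variable {G H : Type*} [Group G] [Group H]

instance normal_upperCentralSeriesStep (C : Subgroup G) [C.Normal] :
    (upperCentralSeriesStep C).Normal := by
  rw [upperCentralSeriesStep_eq_comap_center]
  infer_instance

lemma le_upperCentralSeriesStep_iff {A C : Subgroup G} [C.Normal] :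
    A ≤ upperCentralSeriesStep C ↔ ⁅A, ⊤⁆ ≤ C := by
  rw [commutator_le]
  exact ⟨fun h a ha g _ => h ha g, fun h a ha g => h a ha g (mem_top g)⟩

lemma le_upperCentralSeriesStep (C : Subgroup G) [C.Normal] : C ≤ upperCentralSeriesStep C :=
  le_upperCentralSeriesStep_iff.mpr (commutator_le_left _ _)

lemma comap_upperCentralSeriesStep {f : G →* H} (hf : Function.Surjective f)
    (C : Subgroup H) [C.Normal] :
    comap f (upperCentralSeriesStep C) = upperCentralSeriesStep (comap f C) := by
  ext x
  simp only [mem_comap, mem_upperCentralSeriesStep, hf.forall, map_commutatorElement]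

lemma le_of_le_sup_of_inf_le {A B N : Subgroup G} [N.Normal] (hBA : B ≤ A)
    (hA : A ≤ B ⊔ N) (hAN : A ⊓ N ≤ B) : A ≤ B := by
  intro a ha
  obtain ⟨b, hb, n, hn, rfl⟩ := mem_sup_of_normal_right.mp (hA ha)
  have hn' : n ∈ A ⊓ N := ⟨by simpa using mul_mem (inv_mem (hBA hb)) ha, hn⟩
  exact mul_mem hb (hAN hn')

theorem _root_.isC8_iff_forall_upperCentralSeriesStep_le {Q : Type*} [Group Q] :
    IsC8 Q ↔ ∀ (B : Subgroup Q) [B.Normal], upperCentralSeriesStep B ≤ B := by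
  refine ⟨fun h B _ => ?_, fun h X _ => ?_⟩
  · calc upperCentralSeriesStep B = ⁅upperCentralSeriesStep B, ⊤⁆ := by
          rw [commutator_comm, h _ inferInstance]
      _ ≤ B := le_upperCentralSeriesStep_iff.mp le_rfl
  · refine le_antisymm (commutator_le_right _ _) ?_
    exact (le_upperCentralSeriesStep_iff.mpr (commutator_comm _ _).le).trans (h _)

theorem _root_.IsC8.upperCentralSeries_eq_bot {Q : Type*} [Group Q] (h : IsC8 Q) (n : ℕ) :
    upperCentralSeries Q n = ⊥ := by
  induction n with
  | zero => rfl
  | succ n ih =>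
    have hstep := isC8_iff_forall_upperCentralSeriesStep_le.mp h (upperCentralSeries Q n)
    exact eq_bot_iff.mpr (hstep.trans ih.le)

theorem _root_.IsC8.lowerCentralSeries_eq_top {Q : Type*} [Group Q] (h : IsC8 Q) (n : ℕ) :
    lowerCentralSeries (⊤ : Subgroup Q) n = ⊤ := by
  induction n with
  | zero => rfl
  | succ n ih => rw [lowerCentralSeries_succ, ih]; exact h ⊤ inferInstance

theorem exists_quotSubdirectlyIrreducible_notMem [Finite G] {B : Subgroup G} (hB : B.Normal)
    {g : G} (hg : g ∉ B) :
    ∃ N : Subgroup G, N.Normal ∧ B ≤ N ∧ g ∉ N ∧ QuotSubdirectlyIrreducible N := by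
  obtain ⟨N, ⟨hN, hBN, hgN⟩, hmax⟩ := Set.Finite.exists_maximalFor id _
    ({N : Subgroup G | N.Normal ∧ B ≤ N ∧ g ∉ N}).toFinite ⟨B, hB, le_rfl, hg⟩
  refine ⟨N, hN, hBN, hgN, lt_of_le_of_ne (le_sInf fun X hX => hX.2.le) fun h => hgN ?_⟩
  rw [h, mem_sInf]
  rintro X ⟨hX, hNX⟩
  by_contra hgX
  exact hNX.not_ge (hmax ⟨hX, hBN.trans hNX.le, hgX⟩ hNX.le)

theorem le_of_inf_le_of_isNilpotent_quotient {B C N : Subgroup G} [B.Normal] [C.Normal]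
    [N.Normal] [Group.IsNilpotent (G ⧸ N)] (hC : upperCentralSeriesStep C ≤ C)
    (hBN : B ⊓ N ≤ C) : B ≤ C := by
  let Z (i : ℕ) : Subgroup G := comap (mk' N) (upperCentralSeries (G ⧸ N) i)
  have hZ (i : ℕ) : B ⊓ Z i ≤ C := by
    induction i with
    | zero => simpa [Z, upperCentralSeries_zero] using hBN
    | succ i ih =>
      have hZ_succ : Z (i + 1) = upperCentralSeriesStep (Z i) :=
        comap_upperCentralSeriesStep (mk'_surjective N) (upperCentralSeries (G ⧸ N) i)
      refine le_trans (le_upperCentralSeriesStep_iff.mpr ?_) hC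
      refine le_trans (le_inf ?_ ?_) ih
      · exact (commutator_mono inf_le_left le_rfl).trans (commutator_le_left _ _)
      · exact (commutator_mono inf_le_right le_rfl).trans
          (le_upperCentralSeriesStep_iff.mp hZ_succ.le)
  obtain ⟨k, hk⟩ := Group.IsNilpotent.nilpotent' (G := G ⧸ N)
  simpa [Z, hk] using hZ k

theorem upperCentralSeriesStep_le_of_isC8_quotient {B N : Subgroup G} [B.Normal] [N.Normal]
    (hN : IsC8 (G ⧸ N)) (hBN : upperCentralSeriesStep (B ⊓ N) ≤ B) :
    upperCentralSeriesStep B ≤ B := by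
  set A := upperCentralSeriesStep B
  have hAB : ⁅A, ⊤⁆ ≤ B := le_upperCentralSeriesStep_iff.mp le_rfl
  have hA_sup : A ≤ B ⊔ N := by
    rw [← ker_mk' N, ← comap_map_eq, ← map_le_iff_le_comap]
    calc map (mk' N) A = ⁅map (mk' N) A, ⊤⁆ := by
          rw [commutator_comm, hN _ (Normal.map inferInstance _ (mk'_surjective N))]
      _ = map (mk' N) ⁅A, ⊤⁆ := by
          rw [map_commutator, map_top_of_surjective _ (mk'_surjective N)]
      _ ≤ map (mk' N) B := map_mono hAB
  have hA_inf : A ⊓ N ≤ B := by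
    refine le_trans (le_upperCentralSeriesStep_iff.mpr (le_inf ?_ ?_)) hBN
    · exact (commutator_mono inf_le_left le_rfl).trans hAB
    · exact (commutator_mono inf_le_right le_rfl).trans (commutator_le_left _ _)
  exact le_of_le_sup_of_inf_le (le_upperCentralSeriesStep B) hA_sup hA_inf

theorem exists_lowerCentralSeries_le_of_isNilpotent_quotient {M : Subgroup G} [M.Normal]
    [Group.IsNilpotent (G ⧸ M)] : ∃ c, lowerCentralSeries (⊤ : Subgroup G) c ≤ M := by
  obtain ⟨c, hc⟩ := nilpotent_iff_lowerCentralSeries.mp ‹Group.IsNilpotent (G ⧸ M)›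
  refine ⟨c, ?_⟩
  rw [← ker_mk' M, ← map_eq_bot_iff, map_lowerCentralSeries,
    map_top_of_surjective _ (mk'_surjective M), hc]

theorem upperCentralSeries_le_of_isC8_quotient {M : Subgroup G} [M.Normal]
    (hM : IsC8 (G ⧸ M)) (n : ℕ) : upperCentralSeries G n ≤ M := by
  rw [← ker_mk' M, ← map_eq_bot_iff, ← le_bot_iff, ← hM.upperCentralSeries_eq_bot n]
  exact upperCentralSeries.map (mk'_surjective M) n

theorem lowerCentralSeries_sup_eq_top_of_isC8_quotient {R : Subgroup G} [R.Normal]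
    (hR : IsC8 (G ⧸ R)) (n : ℕ) : lowerCentralSeries (⊤ : Subgroup G) n ⊔ R = ⊤ := by
  rw [← ker_mk' R, ← comap_map_eq, map_lowerCentralSeries,
    map_top_of_surjective _ (mk'_surjective R), hR.lowerCentralSeries_eq_top, comap_top]

theorem isNilpotent_quotient_lowerCentralSeries (n : ℕ) :
    Group.IsNilpotent (G ⧸ lowerCentralSeries (⊤ : Subgroup G) n) := by
  refine nilpotent_iff_lowerCentralSeries.mpr ⟨n, ?_⟩
  rw [← map_top_of_surjective _ (mk'_surjective _), ← map_lowerCentralSeries, map_eq_bot_iff,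
    ker_mk']

theorem upperCentralSeriesStep_le_of_ge [Finite G] (hSI : SIQuotientsNilpotentOrC8 G)
    {R : Subgroup G} [R.Normal]
    (hR : upperCentralSeriesStep R ≤ R) :
    ∀ (B : Subgroup G) [B.Normal], R ≤ B → upperCentralSeriesStep B ≤ B := by
  intro B
  induction B using WellFoundedLT.induction with | _ B ih => ?_
  intro _ hRB
  obtain rfl | hRB := hRB.eq_or_lt
  · exact hR
  obtain ⟨b, hbB, hbR⟩ := SetLike.exists_of_lt hRB
  obtain ⟨N, hN, hRN, hbN, hN_SI⟩ := exists_quotSubdirectlyIrreducible_notMem ‹R.Normal› hbR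
  have hBN : upperCentralSeriesStep (B ⊓ N) ≤ B ⊓ N :=
    ih _ (inf_lt_left.mpr fun h => hbN (h hbB)) (le_inf hRB.le hRN)
  rcases hSI N hN hN_SI with hNil | hC8
  · have : Group.IsNilpotent (G ⧸ N) := hNil
    exact absurd (le_of_inf_le_of_isNilpotent_quotient hBN le_rfl hbB).2 hbN
  · exact upperCentralSeriesStep_le_of_isC8_quotient hC8 (hBN.trans inf_le_left)

theorem isC8_quotient_of_upperCentralSeriesStep_le [Finite G] (hSI : SIQuotientsNilpotentOrC8 G)
    {R : Subgroup G} [R.Normal]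
    (hR : upperCentralSeriesStep R ≤ R) : IsC8 (G ⧸ R) := by
  refine isC8_iff_forall_upperCentralSeriesStep_le.mpr fun B _ => ?_
  rw [← comap_le_comap_of_surjective (mk'_surjective R),
    comap_upperCentralSeriesStep (mk'_surjective R)]
  exact upperCentralSeriesStep_le_of_ge hSI hR _ ((ker_mk' R).ge.trans (ker_le_comap _ _))

theorem lowerCentralSeries_inf_upperCentralSeries_eq_bot [Finite G]
    (hSI : SIQuotientsNilpotentOrC8 G)
    {m : ℕ} (hm : ∀ n ≥ m, lowerCentralSeries (⊤ : Subgroup G) n = lowerCentralSeries ⊤ m)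
    (n : ℕ) : lowerCentralSeries (⊤ : Subgroup G) m ⊓ upperCentralSeries G n = ⊥ := by
  refine eq_bot_iff.mpr fun g hg => of_not_not fun hg1 => ?_
  obtain ⟨M, hM, -, hgM, hM_SI⟩ := exists_quotSubdirectlyIrreducible_notMem normal_bot hg1
  rcases hSI M hM hM_SI with hNil | hC8
  · have : Group.IsNilpotent (G ⧸ M) := hNil
    obtain ⟨c, hc⟩ := exists_lowerCentralSeries_le_of_isNilpotent_quotient (M := M)
    rw [← hm (max m c) (le_max_left m c)] at hg
    exact hgM (hc (lowerCentralSeries_antitone _ (le_max_right m c) hg.1))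
  · exact hgM (upperCentralSeries_le_of_isC8_quotient hC8 n hg.2)

theorem exists_lowerCentralSeries_upperCentralSeries_stable [Finite G] :
    ∃ n₀, ∀ n ≥ n₀,
      lowerCentralSeries (⊤ : Subgroup G) n = lowerCentralSeries ⊤ n₀ ∧
        upperCentralSeries G n = upperCentralSeries G n₀ := by
  obtain ⟨a, ha⟩ := WellFoundedGT.monotone_chain_condition
    (⟨fun n => OrderDual.toDual (lowerCentralSeries (⊤ : Subgroup G) n),
      lowerCentralSeries_antitone ⊤⟩ : ℕ →o (Subgroup G)ᵒᵈ)
  obtain ⟨b, hb⟩ := WellFoundedGT.monotone_chain_condition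
    (⟨upperCentralSeries G, upperCentralSeries_mono G⟩ : ℕ →o Subgroup G)
  refine ⟨max a b, fun n hn => ⟨?_, ?_⟩⟩
  · exact ((ha n (le_of_max_le_left hn)).symm.trans (ha _ (le_max_left a b)) :)
  · exact (hb n (le_of_max_le_right hn)).symm.trans (hb _ (le_max_right a b))

end Subgroup

/-- Let `G` be a finite group in which every subdirectly irreducible quotient is nilpotent
or satisfies (C8). Then `G` has complementary normal subgroups `S` and `R` with `G/S`
nilpotent and `G/R` a (C8)-group, and eventually `S` equals the terms of the lower central
series of `G` and `R` equals the terms of the upper central series of `G`. -/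
theorem nilpotent_C8_factorization
    {G : Type*} [Group G] [Finite G]
    (hSI : ∀ (M : Subgroup G) (hM : M.Normal), QuotSubdirectlyIrreducible M →
      QuotNilpotent M hM ∨ QuotC8 M hM) :
    ∃ (S R : Subgroup G) (hS : S.Normal) (hR : R.Normal),
      S ⊓ R = ⊥ ∧ S ⊔ R = ⊤ ∧ QuotNilpotent S hS ∧ QuotC8 R hR ∧
      ∃ n₀ : ℕ, ∀ n ≥ n₀,
        S = Subgroup.lowerCentralSeries (⊤ : Subgroup G) n ∧ R = Subgroup.upperCentralSeries G n := by
  obtain ⟨n₀, hn₀⟩ := Subgroup.exists_lowerCentralSeries_upperCentralSeries_stable (G := G)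
  have hR : Subgroup.upperCentralSeriesStep (Subgroup.upperCentralSeries G n₀) ≤
      Subgroup.upperCentralSeries G n₀ := (hn₀ (n₀ + 1) n₀.le_succ).2.le
  have hC8 := Subgroup.isC8_quotient_of_upperCentralSeriesStep_le hSI hR
  exact ⟨_, _, inferInstance, inferInstance,
    Subgroup.lowerCentralSeries_inf_upperCentralSeries_eq_bot hSI (fun n hn => (hn₀ n hn).1) n₀,
    Subgroup.lowerCentralSeries_sup_eq_top_of_isC8_quotient hC8 n₀,
    Subgroup.isNilpotent_quotient_lowerCentralSeries n₀, hC8,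
    n₀, fun n hn => ⟨(hn₀ n hn).1.symm, (hn₀ n hn).2.symm⟩⟩
end

section
/- Let G be a finite group such that for every normal subgroup M of G for which the quotient G/M is subdirectly irreducible, G/M is solvable or G/M satisfies (C8), and let (S, R) be the unique pair of normal subgroups of G with S ⊓ R = ⊥, S ⊔ R = ⊤, G/S solvable, and G/R satisfying (C8). Then a normal subgroup X of G is contained in the center Z(G) if and only if X ≤ R and the image (X ⊔ S)/S of X in G/S is contained in the center of G/S. -/
/-! Both directions reduce to commutators: `X` is central iff `⁅⊤, X⁆ = ⊥`, and the image of `X`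
in `G ⧸ N` is central iff `⁅⊤, X⁆ ≤ N`. A central `X` therefore has central image in `G ⧸ R`,
whose center is trivial by (C8), so `X ≤ R`. Conversely, if `X ≤ R` has central image in `G ⧸ S`,
then `⁅⊤, X⁆ ≤ R ⊓ S = ⊥` because `R` is normal. -/

namespace Subgroup

variable {G Q : Type*} [Group G] [Group Q]

theorem map_le_center_iff_commutator_le_ker {f : G →* Q} (hf : Function.Surjective f)
    (X : Subgroup G) : X.map f ≤ center Q ↔ ⁅(⊤ : Subgroup G), X⁆ ≤ f.ker := by
  rw [← commutator_top_left_eq_bot_iff_le_center, ← map_top_of_surjective f hf,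
    ← map_commutator, map_eq_bot_iff]

end Subgroup

theorem QuotientGroup.map_mk'_le_center_iff {G : Type*} [Group G] (N : Subgroup G) [N.Normal]
    (X : Subgroup G) : X.map (mk' N) ≤ Subgroup.center (G ⧸ N) ↔ ⁅(⊤ : Subgroup G), X⁆ ≤ N := by
  rw [Subgroup.map_le_center_iff_commutator_le_ker (mk'_surjective N), ker_mk']

theorem IsC8.center_eq_bot {Q : Type*} [Group Q] (hQ : IsC8 Q) : Subgroup.center Q = ⊥ := by
  rw [← hQ (Subgroup.center Q) inferInstance, Subgroup.commutator_center_right]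

theorem central_iff_le_R_and_central_image_general
    {G : Type*} [Group G]
    (S R : Subgroup G) [hS : S.Normal] [hR : R.Normal]
    (hmeet : S ⊓ R = ⊥)
    (hc8 : IsC8 (G ⧸ R))
    (X : Subgroup G) :
    X ≤ Subgroup.center G ↔
      X ≤ R ∧ X.map (QuotientGroup.mk' S) ≤ Subgroup.center (G ⧸ S) := by
  rw [← Subgroup.commutator_top_left_eq_bot_iff_le_center, QuotientGroup.map_mk'_le_center_iff]
  constructor
  · intro hcomm
    have hXR : X.map (QuotientGroup.mk' R) ≤ ⊥ :=
      hc8.center_eq_bot ▸ (QuotientGroup.map_mk'_le_center_iff R X).2 (hcomm ▸ bot_le)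
    rw [le_bot_iff, Subgroup.map_eq_bot_iff, QuotientGroup.ker_mk'] at hXR
    exact ⟨hXR, hcomm ▸ bot_le⟩
  · rintro ⟨hXR, hXS⟩
    rw [eq_bot_iff, ← hmeet]
    exact le_inf hXS
      ((Subgroup.commutator_mono le_rfl hXR).trans (Subgroup.commutator_le_right ⊤ R))

/-- Let `G` be a finite group in which every subdirectly irreducible quotient is solvable
or satisfies (C8), and let `(S, R)` be the (unique) pair of complementary normal subgroups
with `G/S` solvable and `G/R` satisfying (C8). Then a normal subgroup `X` of `G` is central
if and only if `X ≤ R` and the image of `X` in `G/S` is contained in the center of `G/S`. -/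
theorem central_iff_le_R_and_central_image
    {G : Type*} [Group G] [Finite G]
    (hSI : ∀ (M : Subgroup G) (hM : M.Normal), QuotSubdirectlyIrreducible M →
      QuotSolvable M hM ∨ QuotC8 M hM)
    (S R : Subgroup G) [hS : S.Normal] [hR : R.Normal]
    (hmeet : S ⊓ R = ⊥) (hjoin : S ⊔ R = ⊤)
    (hsolv : IsSolvable (G ⧸ S)) (hc8 : IsC8 (G ⧸ R))
    (X : Subgroup G) (hX : X.Normal) :
    X ≤ Subgroup.center G ↔
      X ≤ R ∧ X.map (QuotientGroup.mk' S) ≤ Subgroup.center (G ⧸ S) :=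
  central_iff_le_R_and_central_image_general S R (hS := hS) (hR := hR) hmeet hc8 X
end

section
/- Let G be a finite nontrivial group satisfying (C8) (that is, ⁅G, X⁆ = X for every normal subgroup X of G) such that for every normal subgroup M of G for which G/M is subdirectly irreducible, G/M is neutral or almost neutral. If (D, T, N) is a relevant triple of G, then G has a minimal nontrivial normal subgroup γ (an atom of the lattice of normal subgroups of G) with γ not contained in D. -/
/-- A group `Q` is *neutral* if `⁅X, Y⁆ = X ⊓ Y` for all normal subgroups `X, Y` of `Q`. -/
def IsNeutral (Q : Type*) [Group Q] : Prop :=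
  ∀ X Y : Subgroup Q, X.Normal → Y.Normal → ⁅X, Y⁆ = X ⊓ Y

/-- A subdirectly irreducible group `Q` with monolith `μ` is *almost neutral* if `Q` is
nonabelian, `μ` is the largest normal subgroup `C` with `⁅μ, C⁆ = 1`, and the interval of
normal subgroups above `μ` is neutral. -/
def IsAlmostNeutral (Q : Type*) [Group Q] : Prop :=
  (¬ ∀ x y : Q, x * y = y * x) ∧
  ∃ μ : Subgroup Q, μ.Normal ∧ ⊥ < μ ∧
    (∀ X : Subgroup Q, X.Normal → ⊥ < X → μ ≤ X) ∧
    ⁅μ, μ⁆ = ⊥ ∧ (∀ C : Subgroup Q, C.Normal → ⁅μ, C⁆ = ⊥ → C ≤ μ) ∧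
    (∀ X Y : Subgroup Q, X.Normal → Y.Normal → X ≤ Y → μ ≤ X → ⁅Y, Y⁆ ≤ X → X = Y)

/-- The quotient `G/M` is neutral. -/
def QuotNeutral {G : Type*} [Group G] (M : Subgroup G) (hM : M.Normal) : Prop :=
  haveI := hM
  IsNeutral (G ⧸ M)

/-- The quotient `G/M` is almost neutral. -/
def QuotAlmostNeutral {G : Type*} [Group G] (M : Subgroup G) (hM : M.Normal) : Prop :=
  haveI := hM
  IsAlmostNeutral (G ⧸ M)

/-!
Take `X` minimal among the normal subgroups below `T` but not below `D`, and an atom `γ ≤ X`.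
If `γ ≤ D`, let `M` be maximal among the normal subgroups not containing `γ`, so that `G/M` is
subdirectly irreducible. Minimality of `X` gives `X ⊓ M ≤ D`. As `X/(D ⊓ X)` is abelian and
`γ ≤ D ⊓ X` survives in `G/M`, (almost) neutrality of `G/M` forces `X ≤ (D ⊓ X) ⊔ M`, and
Dedekind's law then yields `X ≤ D`, a contradiction.
-/

open scoped Pointwise

section

variable {Q : Type*} [Group Q] {X Y : Subgroup Q}

theorem IsNeutral.le_of_commutator_le (hQ : IsNeutral Q) (hY : Y.Normal) (h : ⁅Y, Y⁆ ≤ X) :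
    Y ≤ X := by
  rwa [hQ Y Y hY hY, inf_idem] at h

theorem IsAlmostNeutral.le_of_commutator_le (hQ : IsAlmostNeutral Q) (hX : X.Normal)
    (hY : Y.Normal) (hXY : X ≤ Y) (hX₀ : X ≠ ⊥) (h : ⁅Y, Y⁆ ≤ X) : Y ≤ X := by
  obtain ⟨-, μ, -, -, hμ_le, -, -, h_interval⟩ := hQ
  exact (h_interval X Y hX hY hXY (hμ_le X hX (bot_lt_iff_ne_bot.2 hX₀)) h).ge

end

namespace Subgroup

variable {G : Type*} [Group G]

theorem le_sup_of_commutator_le {M : Subgroup G} (hM : M.Normal)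
    (hQ : QuotNeutral M hM ∨ QuotAlmostNeutral M hM) {A B : Subgroup G} [A.Normal] [B.Normal]
    (hAB : A ≤ B) (hAM : ¬ A ≤ M) (h : ⁅B, B⁆ ≤ A) : B ≤ A ⊔ M := by
  have hf := QuotientGroup.mk'_surjective M
  rw [← QuotientGroup.ker_mk' M, ← map_le_map_iff]
  have h_comm : ⁅B.map (QuotientGroup.mk' M), B.map (QuotientGroup.mk' M)⁆ ≤
      A.map (QuotientGroup.mk' M) := by
    rw [← map_commutator]
    exact map_mono h
  rcases hQ with hQ | hQ
  · exact IsNeutral.le_of_commutator_le hQ (‹B.Normal›.map _ hf) h_comm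
  · refine IsAlmostNeutral.le_of_commutator_le hQ (‹A.Normal›.map _ hf) (‹B.Normal›.map _ hf)
      (map_mono hAB) ?_ h_comm
    rwa [Ne, map_eq_bot_iff, QuotientGroup.ker_mk']

theorem le_of_le_inf_sup {D X M : Subgroup G} [M.Normal] (hX : X ≤ (D ⊓ X) ⊔ M)
    (hXM : X ⊓ M ≤ D) : X ≤ D := by
  intro x hx
  have hx' : x ∈ ((D ⊓ X : Subgroup G) : Set G) * ↑(M ⊓ X) := by
    rw [mul_inf_assoc _ _ _ inf_le_right, ← mul_normal]
    exact ⟨hX hx, hx⟩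
  obtain ⟨d, hd, m, hm, rfl⟩ := hx'
  exact D.mul_mem hd.1 (hXM ⟨hm.2, hm.1⟩)

theorem quotSubdirectlyIrreducible_of_forall_lt_le {M γ : Subgroup G} (hγM : ¬ γ ≤ M)
    (h : ∀ Y : Subgroup G, Y.Normal → M < Y → γ ≤ Y) : QuotSubdirectlyIrreducible M :=
  (left_lt_sup.2 hγM).trans_le (le_sInf fun Y hY => sup_le hY.2.le (h Y hY.1 hY.2))

variable [Finite G]

theorem exists_minimal_normal_le {X : Subgroup G} [X.Normal] (hX : X ≠ ⊥) :
    ∃ γ ≤ X, γ.Normal ∧ ⊥ < γ ∧ ∀ Y : Subgroup G, Y.Normal → Y < γ → Y = ⊥ := by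
  obtain ⟨γ, hγX, hγ⟩ :=
    exists_minimal_le_of_wellFoundedLT (fun Y : Subgroup G => Y.Normal ∧ Y ≠ ⊥) X ⟨‹_›, hX⟩
  refine ⟨γ, hγX, hγ.prop.1, bot_lt_iff_ne_bot.2 hγ.prop.2, fun Y hY hYγ => ?_⟩
  by_contra hY₀
  exact hγ.not_prop_of_lt hYγ ⟨hY, hY₀⟩

theorem exists_quotSubdirectlyIrreducible_not_le {γ : Subgroup G} (hγ : γ ≠ ⊥) :
    ∃ M : Subgroup G, M.Normal ∧ ¬ γ ≤ M ∧ QuotSubdirectlyIrreducible M := by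
  obtain ⟨M, -, hM⟩ := exists_maximal_ge_of_wellFoundedGT
    (fun Y : Subgroup G => Y.Normal ∧ ¬ γ ≤ Y) ⊥ ⟨normal_bot, fun h => hγ (le_bot_iff.1 h)⟩
  refine ⟨M, hM.prop.1, hM.prop.2, quotSubdirectlyIrreducible_of_forall_lt_le hM.prop.2 ?_⟩
  intro Y hY hMY
  by_contra hγY
  exact hM.not_prop_of_gt hMY ⟨hY, hγY⟩

end Subgroup

open Subgroup in
theorem C8_relevant_triple_atom_not_below_general
    {G : Type*} [Group G] [Finite G]
    (hSI : ∀ (M : Subgroup G) (hM : M.Normal), QuotSubdirectlyIrreducible M →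
      QuotNeutral M hM ∨ QuotAlmostNeutral M hM)
    (D T N : Subgroup G) (h : RelevantTriple D T N) :
    ∃ γ : Subgroup G, γ.Normal ∧ ⊥ < γ ∧
      (∀ X : Subgroup G, X.Normal → X < γ → X = ⊥) ∧ ¬ γ ≤ D := by
  obtain ⟨hD, hT, -, hDT, -, hTT, -, -⟩ := h
  obtain ⟨X, -, hX⟩ := exists_minimal_le_of_wellFoundedLT
    (fun Y : Subgroup G => Y.Normal ∧ Y ≤ T ∧ ¬ Y ≤ D) T ⟨hT, le_rfl, hDT.not_ge⟩
  obtain ⟨hXn, hXT, hXD⟩ := hX.prop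
  have := hD; have := hXn
  have hX₀ : X ≠ ⊥ := fun h => hXD (h ▸ bot_le)
  obtain ⟨γ, hγX, hγ, hγ₀, hγ_atom⟩ := exists_minimal_normal_le hX₀
  refine ⟨γ, hγ, hγ₀, hγ_atom, fun hγD => hXD ?_⟩
  obtain ⟨M, hM, hγM, hM_si⟩ := exists_quotSubdirectlyIrreducible_not_le hγ₀.ne'
  have := hM
  have hXM : X ⊓ M ≤ D := by
    by_contra hXM
    have hX_le_M : X ≤ M :=
      (hX.le_of_le ⟨inferInstance, inf_le_left.trans hXT, hXM⟩ inf_le_left).trans inf_le_right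
    exact hγM (hγX.trans hX_le_M)
  have hX_le : X ≤ (D ⊓ X) ⊔ M :=
    le_sup_of_commutator_le hM (hSI M hM hM_si) inf_le_right
      (fun h => hγM ((le_inf hγD hγX).trans h))
      (le_inf ((commutator_mono hXT hXT).trans hTT) (commutator_le_right X X))
  exact le_of_le_inf_sup hX_le hXM

/-- Let `G` be a finite nontrivial (C8)-group in which every subdirectly irreducible
quotient is neutral or almost neutral. If `(D, T, N)` is a relevant triple of `G`, then `G`
has an atom `γ` in its lattice of normal subgroups with `γ ≰ D`. -/
theorem C8_relevant_triple_atom_not_below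
    {G : Type*} [Group G] [Finite G] [Nontrivial G] (hC8 : IsC8 G)
    (hSI : ∀ (M : Subgroup G) (hM : M.Normal), QuotSubdirectlyIrreducible M →
      QuotNeutral M hM ∨ QuotAlmostNeutral M hM)
    (D T N : Subgroup G) (h : RelevantTriple D T N) :
    ∃ γ : Subgroup G, γ.Normal ∧ ⊥ < γ ∧
      (∀ X : Subgroup G, X.Normal → X < γ → X = ⊥) ∧ ¬ γ ≤ D :=
  C8_relevant_triple_atom_not_below_general hSI D T N h
end

section
/- Let L be a finite modular lattice with least element ⊥, let ∇ ∈ L, and let Δ₁, …, Δₙ ∈ L (n ≥ 1) be such that each Δᵢ either equals ∇ or is a lower cover of ∇ (Δᵢ ⋖ ∇), and Δ₁ ⊓ ⋯ ⊓ Δₙ = ⊥. Then for every index i with Δᵢ ⋖ ∇ there exists an atom γ of L with γ ≤ ∇, γ ⊓ Δᵢ = ⊥, and γ ⊔ Δᵢ = ∇. -/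
/-!
It suffices to find an atom `γ ≤ ∇` with `γ ≰ Δᵢ`: then `γ ⊓ Δᵢ < γ` is `⊥`, and
`Δᵢ < γ ⊔ Δᵢ ≤ ∇` forces `γ ⊔ Δᵢ = ∇`. Take `c` minimal among the elements `≤ ∇` and `≰ Δᵢ`;
everything strictly below `c` lies below `c ⊓ Δᵢ`, so `c` is an atom once `c ⊓ Δᵢ = ⊥`. If some `Δⱼ`
misses `c ⊓ Δᵢ`, then `Δⱼ ⋖ ∇` and by lower modularity `c ⊓ Δⱼ ⋖ c`; being below `c`, it is also
below `c ⊓ Δᵢ < c`, so the two are equal and `c ⊓ Δᵢ ≤ Δⱼ` after all.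
-/

section

variable {L : Type*} [Lattice L] {c d t : L}

theorem CovBy.sup_eq_of_le_of_not_le (hd : d ⋖ t) (hc : c ≤ t) (hcd : ¬ c ≤ d) : c ⊔ d = t :=
  (hd.eq_or_eq le_sup_right (sup_le hc hd.le)).resolve_left fun h => hcd (h ▸ le_sup_left)

theorem CovBy.inf_covBy_of_le_of_not_le [IsLowerModularLattice L] (hd : d ⋖ t) (hc : c ≤ t)
    (hcd : ¬ c ≤ d) : c ⊓ d ⋖ c :=
  inf_covBy_of_covBy_sup_right (hd.sup_eq_of_le_of_not_le hc hcd ▸ hd)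

variable [IsLowerModularLattice L] [OrderBot L] {ι : Type*} {Δ : ι → L}

theorem isAtom_of_forall_lt_le (hcov : ∀ j, Δ j = t ∨ Δ j ⋖ t)
    (hbot : ∀ x, (∀ j, x ≤ Δ j) → x = ⊥) (hc : c ≤ t) (hcd : ¬ c ≤ d)
    (hmin : ∀ b < c, b ≤ d) : IsAtom c := by
  have hinf : c ⊓ d = ⊥ := hbot _ fun j => by
    by_contra hj
    have hcj : ¬ c ≤ Δ j := fun h => hj (inf_le_left.trans h)
    have hΔj : Δ j ⋖ t := (hcov j).resolve_left fun h => hcj (h ▸ hc)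
    have hcover : c ⊓ Δ j ⋖ c := hΔj.inf_covBy_of_le_of_not_le hc hcj
    rcases hcover.eq_or_eq (le_inf inf_le_left (hmin _ hcover.lt)) inf_le_left with h | h
    · exact hj (h ▸ inf_le_right)
    · exact hcd (h ▸ inf_le_right)
  exact ⟨fun h => hcd (h ▸ bot_le), fun b hb => le_bot_iff.mp (hinf ▸ le_inf hb.le (hmin b hb))⟩

theorem exists_isAtom_le_not_le [WellFoundedLT L] (hcov : ∀ j, Δ j = t ∨ Δ j ⋖ t)
    (hbot : ∀ x, (∀ j, x ≤ Δ j) → x = ⊥) (htd : ¬ t ≤ d) :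
    ∃ γ, IsAtom γ ∧ γ ≤ t ∧ ¬ γ ≤ d := by
  obtain ⟨c, ⟨hct, hcd⟩, hmin⟩ :=
    exists_minimal_of_wellFoundedLT (fun c => c ≤ t ∧ ¬ c ≤ d) ⟨t, le_rfl, htd⟩
  refine ⟨c, isAtom_of_forall_lt_le hcov hbot hct hcd fun b hb => ?_, hct, hcd⟩
  by_contra hbd
  exact hb.not_ge (hmin ⟨hb.le.trans hct, hbd⟩ hb.le)

end

/-- Let `L` be a finite modular lattice with least element `⊥`, let `∇ ∈ L`, and let
`Δ₁, …, Δₙ` (`n ≥ 1`) be such that each `Δᵢ` equals `∇` or is a lower cover of `∇`, and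
`Δ₁ ⊓ ⋯ ⊓ Δₙ = ⊥`. Then for every `i` with `Δᵢ ⋖ ∇` there is an atom `γ ≤ ∇` that is a
complement of `Δᵢ` in the interval `[⊥, ∇]`. -/
theorem atom_complement_of_lower_cover
    {L : Type*} [Lattice L] [IsModularLattice L] [Finite L] [OrderBot L]
    {n : ℕ} (hn : 1 ≤ n) (nabla : L) (Δ : Fin n → L)
    (hcov : ∀ i, Δ i = nabla ∨ Δ i ⋖ nabla)
    (hinf : Finset.univ.inf' (Finset.univ_nonempty_iff.mpr ⟨⟨0, hn⟩⟩) Δ = ⊥) :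
    ∀ i, Δ i ⋖ nabla →
      ∃ γ : L, IsAtom γ ∧ γ ≤ nabla ∧ γ ⊓ Δ i = ⊥ ∧ γ ⊔ Δ i = nabla := by
  intro i hi
  have hbot : ∀ x, (∀ j, x ≤ Δ j) → x = ⊥ := fun x hx =>
    le_bot_iff.mp (hinf ▸ Finset.le_inf' _ _ fun j _ => hx j)
  obtain ⟨γ, hγ, hγt, hγd⟩ := exists_isAtom_le_not_le hcov hbot hi.lt.not_ge
  exact ⟨γ, hγ, hγt, (hγ.not_le_iff_disjoint.mp hγd).eq_bot,
    hi.sup_eq_of_le_of_not_le hγt hγd⟩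
end

section
/- Let L be a modular lattice with least element ⊥ and greatest element ⊤, and let z, c, d, g ∈ L satisfy z ⊓ c = ⊥, z ⊔ c = ⊤, z ≤ d, z ⋖ g (g covers z), and g ≰ d. Then d ⊓ (g ⊓ c) = ⊥, d ⊔ (g ⊓ c) = d ⊔ g, and d ⋖ d ⊔ g. -/
/-!
Since `g` covers `z ≤ d` and `g ≰ d`, the meet `d ⊓ g` is squeezed back down to `z`. Hence
`d ⊓ (g ⊓ c) = z ⊓ c = ⊥`, and `d ⋖ d ⊔ g` is the modular transfer of the cover `d ⊓ g ⋖ g`.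
Modularity also gives `z ⊔ (g ⊓ c) = (z ⊔ c) ⊓ g = g`, so adding `g ⊓ c` to `d ≥ z` already
adds all of `g`.
-/

theorem CovBy.inf_eq_of_le_of_not_le {α : Type*} [SemilatticeInf α] {a b c : α}
    (hab : a ⋖ b) (hac : a ≤ c) (hbc : ¬ b ≤ c) : c ⊓ b = a := by
  rcases hab.eq_or_eq (le_inf hac hab.le) inf_le_right with h | h
  · exact h
  · exact absurd (h ▸ inf_le_left) hbc

theorem sup_inf_eq_of_le_of_sup_eq_top {α : Type*} [Lattice α] [IsModularLattice α] [OrderTop α]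
    {a b c : α} (hac : a ⊔ c = ⊤) (hab : a ≤ b) : a ⊔ b ⊓ c = b := by
  rw [inf_comm, ← sup_inf_assoc_of_le c hab, hac, top_inf_eq]

/-- In a modular lattice with `⊥` and `⊤`: if `z ⊓ c = ⊥`, `z ⊔ c = ⊤`, `z ≤ d`, `g` covers
`z`, and `g ≰ d`, then `d ⊓ (g ⊓ c) = ⊥`, `d ⊔ (g ⊓ c) = d ⊔ g`, and `d ⊔ g` covers `d`. -/
theorem modular_cover_transfer
    {L : Type*} [Lattice L] [IsModularLattice L] [BoundedOrder L]
    {z c d g : L} (hzc : z ⊓ c = ⊥) (hzc' : z ⊔ c = ⊤)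
    (hzd : z ≤ d) (hzg : z ⋖ g) (hgd : ¬ g ≤ d) :
    d ⊓ (g ⊓ c) = ⊥ ∧ d ⊔ (g ⊓ c) = d ⊔ g ∧ d ⋖ d ⊔ g := by
  have hdg : d ⊓ g = z := hzg.inf_eq_of_le_of_not_le hzd hgd
  refine ⟨by rw [← inf_assoc, hdg, hzc], ?_, covBy_sup_of_inf_covBy_right (hdg ▸ hzg)⟩
  calc d ⊔ g ⊓ c = d ⊔ (z ⊔ g ⊓ c) := by rw [← sup_assoc, sup_eq_left.2 hzd]
    _ = d ⊔ g := by rw [sup_inf_eq_of_le_of_sup_eq_top hzc' hzg.le]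
end

section
/- Let G be a finite group with ⁅G, G⁆ ⊓ Z(G) = ⊥ and ⁅G, G⁆ ⊔ Z(G) = ⊤, where ⁅G, G⁆ is the commutator subgroup and Z(G) the center. Let (D, T, N) be a relevant triple of G with Z(G) ≤ D, and let γ be a normal subgroup of G that covers Z(G) in the lattice of normal subgroups (Z(G) < γ and no normal subgroup lies strictly between) with γ not contained in D. Then the normal subgroup A := γ ⊓ ⁅G, G⁆ satisfies A ⊓ D = ⊥, A ⊔ D = T, and A is commutative. -/
/-!
The cover `γ` of `Z(G)` meets every normal subgroup `X ⊇ Z(G)` either inside `Z(G)` or in all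
of `γ`. Since `γ ≰ D`, the upper cover `T` lies in `D ⊔ γ`, and by the modular law
`T = D ⊔ (γ ⊓ T)`; so `γ ⊓ T ≤ Z(G) ≤ D` is impossible and `γ ≤ T`, while `γ ⊓ D ≤ Z(G)`.
Hence `A ⊓ D ≤ ⁅G, G⁆ ⊓ Z(G) = ⊥`, and `γ = Z(G) ⊔ A` (modular law again, as
`⁅G, G⁆ ⊔ Z(G) = ⊤`) gives `A ⊔ D = D ⊔ γ = T`. Finally `⁅A, A⁆ ≤ A ⊓ ⁅T, T⁆ ≤ A ⊓ D = ⊥`.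
-/

namespace Subgroup

variable {G : Type*} [Group G]

theorem sup_inf_assoc_of_le_of_normal_s12 {X Z : Subgroup G} (Y : Subgroup G) [Y.Normal]
    (hXZ : X ≤ Z) : (X ⊔ Y) ⊓ Z = X ⊔ Y ⊓ Z := by
  refine le_antisymm ?_ (le_inf (sup_le_sup_left inf_le_left X) (sup_le hXZ inf_le_right))
  rintro _ ⟨hxy, hz⟩
  obtain ⟨x, hx, y, hy, rfl⟩ := mem_sup_of_normal_right.mp hxy
  have hyZ : y ∈ Z := (Z.mul_mem_cancel_left (hXZ hx)).mp hz
  exact mul_mem_sup hx ⟨hy, hyZ⟩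

theorem inf_le_or_le_of_covers {C γ X : Subgroup G} [γ.Normal] [X.Normal]
    (hcov : ∀ X : Subgroup G, X.Normal → C < X → X < γ → False)
    (hCγ : C ≤ γ) (hCX : C ≤ X) : γ ⊓ X ≤ C ∨ γ ≤ X := by
  by_contra! h
  exact hcov (γ ⊓ X) inferInstance (lt_of_le_not_ge (le_inf hCγ hCX) h.1) (inf_lt_left.mpr h.2)

theorem mul_comm_of_commutator_le_of_inf_eq_bot {A D : Subgroup G} [A.Normal]
    (hAD : ⁅A, A⁆ ≤ D) (hbot : A ⊓ D = ⊥) {a b : G} (ha : a ∈ A) (hb : b ∈ A) :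
    a * b = b * a := by
  have hAA : ⁅A, A⁆ = ⊥ := eq_bot_iff.mpr (hbot ▸ le_inf (commutator_le_left A A) hAD)
  exact mem_centralizer_iff.mp (commutator_eq_bot_iff_le_centralizer.mp hAA hb) a ha

end Subgroup

open Subgroup

theorem splitting_construction_general
    {G : Type*} [Group G]
    (hmeet : commutator G ⊓ Subgroup.center G = ⊥)
    (hjoin : commutator G ⊔ Subgroup.center G = ⊤)
    (D T N : Subgroup G) (h : RelevantTriple D T N)
    (hZD : Subgroup.center G ≤ D)
    (γ : Subgroup G) (hγ : γ.Normal) (hZγ : Subgroup.center G < γ)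
    (hcov : ∀ X : Subgroup G, X.Normal → Subgroup.center G < X → X < γ → False)
    (hγD : ¬ γ ≤ D) :
    (γ ⊓ commutator G) ⊓ D = ⊥ ∧ (γ ⊓ commutator G) ⊔ D = T ∧
    (∀ a b : G, a ∈ γ ⊓ commutator G → b ∈ γ ⊓ commutator G → a * b = b * a) := by
  obtain ⟨hD, hTn, -, hDT, hupper, hTTD, -, -⟩ := h
  have hTDγ : T ≤ D ⊔ γ := hupper _ (sup_normal D γ) (left_lt_sup.mpr hγD)
  have hT_eq : T = D ⊔ γ ⊓ T := by
    rw [← sup_inf_assoc_of_le_of_normal_s12 γ hDT.le, inf_eq_right.mpr hTDγ]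
  have hγT : γ ≤ T := (inf_le_or_le_of_covers hcov hZγ.le (hZD.trans hDT.le)).resolve_left
    fun hle => hDT.not_ge (hT_eq.trans_le (sup_le le_rfl (hle.trans hZD)))
  have hγDZ : γ ⊓ D ≤ center G := (inf_le_or_le_of_covers hcov hZγ.le hZD).resolve_right hγD
  have hbot : (γ ⊓ commutator G) ⊓ D = ⊥ := by
    rw [eq_bot_iff, ← hmeet]
    exact fun x ⟨⟨hxγ, hxc⟩, hxD⟩ => ⟨hxc, hγDZ ⟨hxγ, hxD⟩⟩
  have hγ_eq : γ = center G ⊔ γ ⊓ commutator G := by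
    rw [inf_comm, ← sup_inf_assoc_of_le_of_normal_s12 _ hZγ.le, sup_comm, hjoin, top_inf_eq]
  refine ⟨hbot, le_antisymm (sup_le (inf_le_left.trans hγT) hDT.le) ?_, fun a b ha hb => ?_⟩
  · calc T ≤ D ⊔ γ := hTDγ
      _ ≤ D ⊔ (center G ⊔ γ ⊓ commutator G) := sup_le_sup_left hγ_eq.le D
      _ = γ ⊓ commutator G ⊔ D := by rw [← sup_assoc, sup_eq_left.mpr hZD, sup_comm]
  · exact mul_comm_of_commutator_le_of_inf_eq_bot
      ((commutator_mono (inf_le_left.trans hγT) (inf_le_left.trans hγT)).trans hTTD) hbot ha hb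

/-- Let `G` be a finite group in which the commutator subgroup and the center are
complementary normal subgroups, let `(D, T, N)` be a relevant triple with `Z(G) ≤ D`, and
let `γ` be a normal subgroup covering `Z(G)` in the lattice of normal subgroups with
`γ ≰ D`. Then `A := γ ⊓ ⁅G, G⁆` satisfies `A ⊓ D = ⊥`, `A ⊔ D = T`, and `A` is
commutative. -/
theorem splitting_construction
    {G : Type*} [Group G] [Finite G]
    (hmeet : commutator G ⊓ Subgroup.center G = ⊥)
    (hjoin : commutator G ⊔ Subgroup.center G = ⊤)
    (D T N : Subgroup G) (h : RelevantTriple D T N)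
    (hZD : Subgroup.center G ≤ D)
    (γ : Subgroup G) (hγ : γ.Normal) (hZγ : Subgroup.center G < γ)
    (hcov : ∀ X : Subgroup G, X.Normal → Subgroup.center G < X → X < γ → False)
    (hγD : ¬ γ ≤ D) :
    (γ ⊓ commutator G) ⊓ D = ⊥ ∧ (γ ⊓ commutator G) ⊔ D = T ∧
    (∀ a b : G, a ∈ γ ⊓ commutator G → b ∈ γ ⊓ commutator G → a * b = b * a) :=
  splitting_construction_general hmeet hjoin D T N h hZD γ hγ hZγ hcov hγD
end

section
/- Let G be a finite group such that for every normal subgroup M of G for which the quotient G/M is subdirectly irreducible, G/M is abelian, neutral, or almost neutral. Then for every relevant triple (D, T, N) of G there exist normal subgroups A and B of G such that B ≤ D, A ⊓ B = ⊥, A ⊔ B = N, and A is commutative. -/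
/-- The quotient `G/M` is abelian. -/
def QuotAbelian {G : Type*} [Group G] (M : Subgroup G) (hM : M.Normal) : Prop :=
  haveI := hM
  ∀ x y : G ⧸ M, x * y = y * x

/-!
Since `D` is completely meet-irreducible, `G/D` is subdirectly irreducible. It cannot be neutral,
because `T/D` is a nontrivial abelian normal subgroup; if it is almost neutral, `T/D` contains the
monolith, so `N/D` centralizes the monolith and `N = T`. Either way `⁅N, N⁆ ≤ D`, and we take
`B = ⁅N, N⁆`. It remains to find an abelian normal complement `A` of `⁅N, N⁆` in `N`.

Such a complement is built modulo smaller and smaller normal subgroups `K ≤ ⁅N, N⁆`, starting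
with `A = N` modulo `⁅N, N⁆`. Given `A` modulo `U` and a normal `K` covered by `U`, let `M ≥ K` be
maximal among the normal subgroups not containing `U`; then `G/M` is subdirectly irreducible with
monolith `(U ⊔ M)/M`. It is not abelian as `U ≤ ⁅G, G⁆`, and since `⁅A, A⁆ ≤ U ≤ A`, neutrality
or neutrality above the monolith forces `A ≤ U ⊔ M`. By the modular law `A ⊓ M` is then a
complement modulo `U ⊓ M = K`.
-/

namespace Subgroup

variable {G : Type*} [Group G]

theorem le_sup_inf_of_le_sup {U A M : Subgroup G} [M.Normal] (hUA : U ≤ A) (hA : A ≤ U ⊔ M) :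
    A ≤ U ⊔ A ⊓ M := by
  intro x hx
  obtain ⟨u, hu, m, hm, rfl⟩ := mem_sup_of_normal_right.mp (hA hx)
  have hmA : m ∈ A := by simpa using A.mul_mem (A.inv_mem (hUA hu)) hx
  exact mul_mem_sup hu ⟨hmA, hm⟩

theorem le_sup_of_map_mk'_le {M : Subgroup G} [M.Normal] {X Y : Subgroup G}
    (h : X.map (QuotientGroup.mk' M) ≤ Y.map (QuotientGroup.mk' M)) : X ≤ Y ⊔ M := by
  simpa using map_le_map_iff.mp h

theorem map_mk'_ne_bot {M : Subgroup G} [M.Normal] {X : Subgroup G} (hXM : ¬ X ≤ M) :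
    X.map (QuotientGroup.mk' M) ≠ ⊥ := by
  simpa [map_eq_bot_iff] using hXM

end Subgroup

section

open Subgroup

variable {G : Type*} [Group G]

theorem commutator_top_le_of_quotAbelian {M : Subgroup G} {hM : M.Normal}
    (h : QuotAbelian M hM) : ⁅(⊤ : Subgroup G), ⊤⁆ ≤ M := by
  refine commutator_le.mpr fun g₁ _ g₂ _ => (QuotientGroup.eq_one_iff _).mp ?_
  rw [← QuotientGroup.mk'_apply, map_commutatorElement, commutatorElement_eq_one_iff_mul_comm]
  exact h _ _

theorem le_commutator_sup_of_quotNeutral {M : Subgroup G} {hM : M.Normal}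
    (h : QuotNeutral M hM) {X : Subgroup G} (hX : X.Normal) : X ≤ ⁅X, X⁆ ⊔ M := by
  have hsurj := QuotientGroup.mk'_surjective M
  refine le_sup_of_map_mk'_le ?_
  rw [map_commutator, h _ _ (hX.map _ hsurj) (hX.map _ hsurj), inf_idem]

theorem le_sup_of_quotAlmostNeutral {M : Subgroup G} {hM : M.Normal}
    (h : QuotAlmostNeutral M hM) {X Y : Subgroup G} (hX : X.Normal) (hY : Y.Normal)
    (hXM : ¬ X ≤ M) (hXY : X ≤ Y) (hYY : ⁅Y, Y⁆ ≤ X ⊔ M) : Y ≤ X ⊔ M := by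
  obtain ⟨-, μ, -, -, hμmin, -, -, hμint⟩ := h
  have hsurj := QuotientGroup.mk'_surjective M
  refine le_sup_of_map_mk'_le
    (hμint _ _ (hX.map _ hsurj) (hY.map _ hsurj) (map_mono hXY) ?_ ?_).ge
  · exact hμmin _ (hX.map _ hsurj) (bot_lt_iff_ne_bot.mpr (map_mk'_ne_bot hXM))
  · rw [← map_commutator]
    exact map_le_map_iff.mpr (by simpa using hYY)

theorem le_sup_of_commutator_le_of_quotAlmostNeutral {M : Subgroup G} {hM : M.Normal}
    (h : QuotAlmostNeutral M hM) {X Y : Subgroup G} (hX : X.Normal) (hY : Y.Normal)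
    (hXM : ¬ X ≤ M) (hXY : ⁅X, Y⁆ ≤ M) : Y ≤ X ⊔ M := by
  obtain ⟨-, μ, -, -, hμmin, -, hμcent, -⟩ := h
  have hsurj := QuotientGroup.mk'_surjective M
  have hμX : μ ≤ X.map (QuotientGroup.mk' M) :=
    hμmin _ (hX.map _ hsurj) (bot_lt_iff_ne_bot.mpr (map_mk'_ne_bot hXM))
  have hμY : ⁅μ, Y.map (QuotientGroup.mk' M)⁆ = ⊥ := by
    refine le_bot_iff.mp ((commutator_mono hμX le_rfl).trans ?_)
    rw [← map_commutator, le_bot_iff, Subgroup.map_eq_bot_iff, QuotientGroup.ker_mk']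
    exact hXY
  exact le_sup_of_map_mk'_le ((hμcent _ (hY.map _ hsurj) hμY).trans hμX)

theorem quotSubdirectlyIrreducible_of_not_le {M U : Subgroup G} (hUM : ¬ U ≤ M)
    (hU : ∀ X : Subgroup G, X.Normal → M < X → U ≤ X) : QuotSubdirectlyIrreducible M :=
  (left_lt_sup.mpr hUM).trans_le (le_sInf fun X hX => sup_le hX.2.le (hU X hX.1 hX.2))

theorem exists_quotSubdirectlyIrreducible_of_not_le [Finite G] {K U : Subgroup G}
    (hK : K.Normal) (hUK : ¬ U ≤ K) :
    ∃ M : Subgroup G, M.Normal ∧ K ≤ M ∧ ¬ U ≤ M ∧ QuotSubdirectlyIrreducible M := by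
  obtain ⟨M, hKM, ⟨hM, hUM⟩, hmax⟩ :=
    exists_maximal_ge_of_wellFoundedGT (fun Y : Subgroup G => Y.Normal ∧ ¬ U ≤ Y) K
      ⟨hK, hUK⟩
  refine ⟨M, hM, hKM, hUM, quotSubdirectlyIrreducible_of_not_le hUM fun X hX hMX => ?_⟩
  by_contra hUX
  exact hMX.not_ge (hmax ⟨hX, hUX⟩ hMX.le)

theorem RelevantTriple.commutator_le
    (hSI : ∀ (M : Subgroup G) (hM : M.Normal), QuotSubdirectlyIrreducible M →
      QuotAbelian M hM ∨ QuotNeutral M hM ∨ QuotAlmostNeutral M hM)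
    {D T N : Subgroup G} (h : RelevantTriple D T N) : ⁅N, N⁆ ≤ D := by
  obtain ⟨hD, hT, hN, hDT, hcov, hTT, hTN, -⟩ := h
  have hTD : ¬ T ≤ D := hDT.not_ge
  rcases hSI D hD (quotSubdirectlyIrreducible_of_not_le hTD hcov) with hab | hneu | han
  · exact (commutator_mono le_top le_top).trans (commutator_top_le_of_quotAbelian hab)
  · exact absurd ((le_commutator_sup_of_quotNeutral hneu hT).trans (sup_le hTT le_rfl)) hTD
  · have hNT : N ≤ T :=
      (le_sup_of_commutator_le_of_quotAlmostNeutral han hT hN hTD hTN).trans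
        (sup_le le_rfl hDT.le)
    exact (commutator_mono hNT hNT).trans hTT

theorem le_sup_of_commutator_le {M U A : Subgroup G} {hM : M.Normal}
    (hMcase : QuotAbelian M hM ∨ QuotNeutral M hM ∨ QuotAlmostNeutral M hM)
    (hU : U.Normal) (hUM : ¬ U ≤ M) (hUG : U ≤ ⁅(⊤ : Subgroup G), ⊤⁆) (hA : A.Normal)
    (hUA : U ≤ A) (hAA : ⁅A, A⁆ ≤ U) : A ≤ U ⊔ M := by
  rcases hMcase with hab | hneu | han
  · exact absurd (hUG.trans (commutator_top_le_of_quotAbelian hab)) hUM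
  · exact (le_commutator_sup_of_quotNeutral hneu hA).trans (sup_le_sup_right hAA M)
  · exact le_sup_of_quotAlmostNeutral han hU hA hUM hUA (hAA.trans le_sup_left)

structure IsAbelianComplementMod (N K A : Subgroup G) : Prop where
  normal : A.Normal
  inf_eq : A ⊓ ⁅N, N⁆ = K
  sup_eq : A ⊔ ⁅N, N⁆ = N
  commutator_le : ⁅A, A⁆ ≤ K

theorem isAbelianComplementMod_commutator_self {N : Subgroup G} (hN : N.Normal) :
    IsAbelianComplementMod N ⁅N, N⁆ N :=
  ⟨hN, inf_eq_right.mpr (commutator_le_left N N), sup_eq_left.mpr (commutator_le_left N N),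
    le_rfl⟩

theorem IsAbelianComplementMod.exists_of_covBy [Finite G]
    (hSI : ∀ (M : Subgroup G) (hM : M.Normal), QuotSubdirectlyIrreducible M →
      QuotAbelian M hM ∨ QuotNeutral M hM ∨ QuotAlmostNeutral M hM)
    {N K U A : Subgroup G} (hN : N.Normal) (hA : IsAbelianComplementMod N U A) (hK : K.Normal)
    (hKU : K < U) (hcov : ∀ V : Subgroup G, V.Normal → K ≤ V → V < U → V = K) :
    ∃ A' : Subgroup G, IsAbelianComplementMod N K A' := by
  obtain ⟨hAn, hinf, hsup, hAA⟩ := hA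
  have hUN : U ≤ ⁅N, N⁆ := hinf ▸ inf_le_right
  have hUA : U ≤ A := hinf ▸ inf_le_left
  have hU : U.Normal := hinf ▸ normal_inf_normal A ⁅N, N⁆
  obtain ⟨M, hM, hKM, hUM, hMSI⟩ := exists_quotSubdirectlyIrreducible_of_not_le hK hKU.not_ge
  have hUMK : U ⊓ M = K :=
    hcov _ (normal_inf_normal U M) (le_inf hKU.le hKM) (inf_lt_left.mpr hUM)
  have hAUM : A ≤ U ⊔ M := le_sup_of_commutator_le (hSI M hM hMSI) hU hUM
    (hUN.trans (commutator_mono le_top le_top)) hAn hUA hAA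
  refine ⟨A ⊓ M, normal_inf_normal A M, ?_, ?_, ?_⟩
  · rw [inf_right_comm, hinf, hUMK]
  · refine le_antisymm ((sup_le_sup_right inf_le_left _).trans hsup.le) ?_
    calc N = A ⊔ ⁅N, N⁆ := hsup.symm
      _ ≤ U ⊔ A ⊓ M ⊔ ⁅N, N⁆ := sup_le_sup_right (le_sup_inf_of_le_sup hUA hAUM) _
      _ ≤ A ⊓ M ⊔ ⁅N, N⁆ :=
        sup_le (sup_le (hUN.trans le_sup_right) le_sup_left) le_sup_right
  · rw [← hUMK]
    exact le_inf ((commutator_mono inf_le_left inf_le_left).trans hAA)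
      ((commutator_mono inf_le_right inf_le_right).trans (commutator_le_left M M))

theorem exists_isAbelianComplementMod_bot [Finite G]
    (hSI : ∀ (M : Subgroup G) (hM : M.Normal), QuotSubdirectlyIrreducible M →
      QuotAbelian M hM ∨ QuotNeutral M hM ∨ QuotAlmostNeutral M hM)
    {N : Subgroup G} (hN : N.Normal) : ∃ A : Subgroup G, IsAbelianComplementMod N ⊥ A := by
  obtain ⟨K, ⟨hK, A, hA⟩, hmin⟩ :=
    exists_minimal_of_wellFoundedLT
      (fun K : Subgroup G => K.Normal ∧ ∃ A, IsAbelianComplementMod N K A)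
      ⟨_, commutator_normal N N, N, isAbelianComplementMod_commutator_self hN⟩
  obtain rfl | hKbot := eq_or_ne K ⊥
  · exact ⟨A, hA⟩
  obtain ⟨L, ⟨hL, hLK⟩, hmax⟩ := exists_maximal_of_wellFoundedGT
    (fun L : Subgroup G => L.Normal ∧ L < K) ⟨⊥, normal_bot, bot_lt_iff_ne_bot.mpr hKbot⟩
  obtain ⟨A', hA'⟩ := hA.exists_of_covBy hSI hN hL hLK
    fun V hV hLV hVK => le_antisymm (hmax ⟨hV, hVK⟩ hLV) hLV
  exact absurd (hmin ⟨hL, A', hA'⟩ hLK.le) hLK.not_ge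

end

/-- Let `G` be a finite group in which every subdirectly irreducible quotient is abelian,
neutral, or almost neutral. Then every relevant triple `(D, T, N)` of `G` is split: there
are normal subgroups `A` and `B` with `B ≤ D`, `A ⊓ B = ⊥`, `A ⊔ B = N`, and `A`
commutative. -/
theorem relevant_triple_split
    {G : Type*} [Group G] [Finite G]
    (hSI : ∀ (M : Subgroup G) (hM : M.Normal), QuotSubdirectlyIrreducible M →
      QuotAbelian M hM ∨ QuotNeutral M hM ∨ QuotAlmostNeutral M hM)
    (D T N : Subgroup G) (h : RelevantTriple D T N) :
    ∃ A B : Subgroup G, A.Normal ∧ B.Normal ∧ B ≤ D ∧ A ⊓ B = ⊥ ∧ A ⊔ B = N ∧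
      (∀ a b : G, a ∈ A → b ∈ A → a * b = b * a) := by
  have hN : N.Normal := h.2.2.1
  obtain ⟨A, ⟨hA, hinf, hsup, hAA⟩⟩ := exists_isAbelianComplementMod_bot hSI hN
  refine ⟨A, ⁅N, N⁆, hA, Subgroup.commutator_normal N N, h.commutator_le hSI, hinf, hsup,
    fun a b ha hb => ?_⟩
  have hab := hAA (Subgroup.commutator_mem_commutator ha hb)
  rwa [Subgroup.mem_bot, commutatorElement_eq_one_iff_mul_comm] at hab
end
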